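/- There exists a graph G whose end space is second countable although G contains uncountably many rays that pairwise meet precisely in their common first vertex and represent pairwise distinct ends of G. -/

import Mathlib

/-! Common definitions: rays, ends (à la Halin), the end space, directions
(via Mathlib's `SimpleGraph.end`), domination, generalised paths, etc. -/

open Classical SimpleGraph

universe u

variable {V : Type u}

/-- A ray in `G`: a one-way infinite path. -/
structure Ray (G : SimpleGraph V) where
  f : ℕ → V
  inj : Function.Injective f
  adj : ∀ n, G.Adj (f n) (f (n + 1))

namespace Ray

variable {G : SimpleGraph V}

/-- `R` has a tail inside the vertex set `S`. -/
def TailIn (R : Ray G) (S : Set V) : Prop :=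
  ∃ N, ∀ n, N ≤ n → R.f n ∈ S

/-- The set of the first `n` vertices of `R`. -/
noncomputable def initSeg (R : Ray G) (n : ℕ) : Finset V :=
  (Finset.range n).image R.f

end Ray

/-- Two rays are equivalent if no finite vertex set separates them, i.e. for
every finite `X` they have tails in a common component of `G - X`. -/
def RayEquiv (G : SimpleGraph V) (R S : Ray G) : Prop :=
  ∀ X : Finset V, ∃ C : G.ComponentCompl (X : Set V), R.TailIn C ∧ S.TailIn C

/-- The ends of `G` in the sense of Halin: equivalence classes of rays. -/
def Ends (G : SimpleGraph V) : Type u :=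
  { ω : Set (Ray G) // ∃ R : Ray G, ω = { S | RayEquiv G R S } }

/-- The end of a ray. -/
def Ray.end (G : SimpleGraph V) (R : Ray G) : Ends G :=
  ⟨{ S | RayEquiv G R S }, R, rfl⟩

/-- The end `ω` lives in the component `C` of `G - X`:  every ray in `ω` has a
tail in `C`.  (For genuine ends this is the statement `C = C(X,ω)`.) -/
def LivesIn {G : SimpleGraph V} (ω : Ends G) (X : Finset V)
    (C : G.ComponentCompl (X : Set V)) : Prop :=
  ∀ R ∈ ω.1, R.TailIn C

/-- The basic open set `Ω(X,C)` of the end space. -/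
def basicSet (G : SimpleGraph V) (X : Finset V) (C : G.ComponentCompl (X : Set V)) :
    Set (Ends G) :=
  { ω | LivesIn ω X C }

/-- The end space: the topology on `Ends G` generated by the sets `Ω(X,C)`. -/
instance endsTopology (G : SimpleGraph V) : TopologicalSpace (Ends G) :=
  TopologicalSpace.generateFrom
    { U | ∃ (X : Finset V) (C : G.ComponentCompl (X : Set V)), U = basicSet G X C }

section Directions

/-- The component `f(X)` chosen by the direction `f` at the finite vertex set `X`. -/
def dirComp {G : SimpleGraph V} (f : G.end) (X : Finset V) : G.ComponentCompl (X : Set V) :=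
  f.1 (Opposite.op X)


variable (G : SimpleGraph V)

/-- The ray `R` induces the direction `f` (i.e. `f = f_ω` for the end `ω` of `R`):
for every finite `X`, the component `f(X)` contains a tail of `R`. -/
def InducesDir {G : SimpleGraph V} (R : Ray G) (f : G.end) : Prop :=
  ∀ X : Finset V, R.TailIn (dirComp f X : Set V)

/-- The end `ω` induces the direction `f`, i.e. `f = f_ω`. -/
def EndInducesDir {G : SimpleGraph V} (ω : Ends G) (f : G.end) : Prop :=
  ∀ (X : Finset V), ∀ R ∈ ω.1, R.TailIn (dirComp f X : Set V)

/-- A direction `f` is countably determined in `G` if some countable set of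
directional choices `(X, C)` distinguishes `f` from every other direction. -/
def DirCountablyDetermined {G : SimpleGraph V} (f : G.end) : Prop :=
  ∃ D : Set ((X : Finset V) × G.ComponentCompl (X : Set V)), D.Countable ∧
    ∀ h : G.end, h ≠ f → ∃ p ∈ D,
      dirComp f p.1 = p.2 ∧ dirComp h p.1 ≠ p.2

/-- `G` is countably determined: some countable set of directional choices
distinguishes every two distinct directions of `G` from each other. -/
def GraphCountablyDetermined (G : SimpleGraph V) : Prop :=
  ∃ D : Set ((X : Finset V) × G.ComponentCompl (X : Set V)), D.Countable ∧
    ∀ f h : G.end, f ≠ h → ∃ p ∈ D,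
      (dirComp f p.1 = p.2 ∧ dirComp h p.1 ≠ p.2) ∨
      (dirComp h p.1 = p.2 ∧ dirComp f p.1 ≠ p.2)

/-- `R` is directional in `G`: the directional choices given by the finite
initial segments of `R` distinguish the direction induced by `R` from every
other direction of `G`. -/
def Directional {G : SimpleGraph V} (R : Ray G) : Prop :=
  ∀ h : G.end, (∃ X : Finset V, ¬ R.TailIn (dirComp h X : Set V)) →
    ∃ n : ℕ, ¬ R.TailIn (dirComp h (R.initSeg n) : Set V)

/-- `R` is topological in `G`: the basic open sets `Ω(X_n, ω)`, for `X_n` the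
first `n` vertices of `R` and `ω` the end of `R`, form a neighbourhood base at
`ω` in the end space of `G`. -/
def Topological {G : SimpleGraph V} (R : Ray G) : Prop :=
  ∀ U : Set (Ends G), IsOpen U → R.end G ∈ U →
    ∃ (n : ℕ) (C : G.ComponentCompl (R.initSeg n : Set V)),
      LivesIn (R.end G) (R.initSeg n) C ∧ basicSet G (R.initSeg n) C ⊆ U

end Directions

section Domination

variable (G : SimpleGraph V)

/-- `v` dominates the ray `R`: no finite vertex set avoiding `v` separates `v`
from `R` (equivalently, there is an infinite `v`–`R` fan). -/
def DominatesRay (v : V) (R : Ray G) : Prop :=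
  ∀ X : Finset V, v ∉ X → ∃ (u : V) (W : G.Walk v u),
    (∃ n, R.f n = u) ∧ ∀ w ∈ W.support, w ∉ (X : Set V)

/-- `v` dominates the end `ω`. -/
def DominatesEnd (v : V) (ω : Ends G) : Prop :=
  ∀ R ∈ ω.1, DominatesRay G v R

end Domination

/-- A double ray in `G`. -/
structure DoubleRay (G : SimpleGraph V) where
  f : ℤ → V
  inj : Function.Injective f
  adj : ∀ n : ℤ, G.Adj (f n) (f (n + 1))

namespace DoubleRay

variable {G : SimpleGraph V}

/-- The positive tail of `D` lies in the end `ω`. -/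
def PosTailIn (D : DoubleRay G) (ω : Ends G) : Prop :=
  ∃ R ∈ ω.1, ∃ N : ℤ, ∀ n : ℕ, R.f n = D.f (N + n)

/-- The negative tail of `D` lies in the end `ω`. -/
def NegTailIn (D : DoubleRay G) (ω : Ends G) : Prop :=
  ∃ R ∈ ω.1, ∃ N : ℤ, ∀ n : ℕ, R.f n = D.f (N - n)

end DoubleRay

/-- `P` is (the vertex set of) a generalised path in `G` with endpoints
`ω₁ ≠ ω₂`. -/
def IsGenPath (G : SimpleGraph V) (P : Set V) (ω₁ ω₂ : Ends G) : Prop :=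
  (∃ D : DoubleRay G, P = Set.range D.f ∧
    ((D.PosTailIn ω₁ ∧ D.NegTailIn ω₂) ∨ (D.PosTailIn ω₂ ∧ D.NegTailIn ω₁))) ∨
  (∃ (u v : V) (W : G.Walk u v), W.IsPath ∧ P = { x | x ∈ W.support } ∧
    ((DominatesEnd G u ω₁ ∧ DominatesEnd G v ω₂) ∨
     (DominatesEnd G u ω₂ ∧ DominatesEnd G v ω₁))) ∨
  (∃ R : Ray G, P = Set.range R.f ∧
    ((R ∈ ω₁.1 ∧ DominatesEnd G (R.f 0) ω₂) ∨
     (R ∈ ω₂.1 ∧ DominatesEnd G (R.f 0) ω₁)))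

/-- A sun in `G` centred at `ω`: pairwise vertex-disjoint generalised paths
`(P i, {ω, leaf i})` with pairwise distinct leaves `leaf i ≠ ω`, where either
all the `P i` are double rays with one tail in `leaf i` and another in `ω`, or
all the `P i` are rays in `leaf i` whose first vertices dominate `ω`. -/
def IsSun (G : SimpleGraph V) (ω : Ends G) {I : Type*}
    (P : I → Set V) (leaf : I → Ends G) : Prop :=
  (∀ i j, i ≠ j → Disjoint (P i) (P j)) ∧ Function.Injective leaf ∧
  (∀ i, leaf i ≠ ω) ∧
  ((∀ i, ∃ D : DoubleRay G, P i = Set.range D.f ∧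
      ((D.PosTailIn (leaf i) ∧ D.NegTailIn ω) ∨
       (D.PosTailIn ω ∧ D.NegTailIn (leaf i)))) ∨
   (∀ i, ∃ R : Ray G, P i = Set.range R.f ∧ R ∈ (leaf i).1 ∧
      DominatesEnd G (R.f 0) ω))

/-! Let `T` be the infinite binary tree and, for every branch `i : ℕ → Bool` of `T`, add a ray
`Rᵢ` starting at the root of `T`, each further vertex of which is joined to every vertex of the
branch `i`. The `Rᵢ` are continuum many rays meeting only in the root, and `Rᵢ` is equivalent to the
branch `i`, so they lie in distinct ends. Deleting the (finitely many) tree vertices of depth at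
most `d` leaves one component for each tree vertex `s` of depth `d + 1`, consisting of the subtree
at `s` together with the rays of the branches through `s`. Every finite `X` avoids all tree
vertices of depth `> d` for some `d`, and then each such component minus `X` is still connected
through the subtree at `s`; so these countably many components already give a base of the end
space. -/

open Filter

namespace SimpleGraph.ComponentCompl

variable {G : SimpleGraph V} {K : Set V}

theorem eq_of_mem_of_mem {C D : G.ComponentCompl K} {v : V} (hC : v ∈ C) (hD : v ∈ D) :
    C = D :=
  hC.choose_spec.symm.trans hD.choose_spec

theorem mem_iff_of_adj {C : G.ComponentCompl K} {v w : V} (hv : v ∉ K) (hw : w ∉ K)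
    (h : G.Adj v w) : v ∈ C ↔ w ∈ C :=
  ⟨fun hvC => C.mem_of_adj v w hvC hw h, fun hwC => C.mem_of_adj w v hwC hv h.symm⟩

end SimpleGraph.ComponentCompl

namespace Ray

variable {G : SimpleGraph V}

theorem tailIn_iff {R : Ray G} {S : Set V} : R.TailIn S ↔ ∀ᶠ n in atTop, R.f n ∈ S :=
  eventually_atTop.symm

theorem eventually_notMem (R : Ray G) (X : Finset V) : ∀ᶠ n in atTop, R.f n ∉ X := by
  rw [← Nat.cofinite_eq_atTop]
  exact R.inj.tendsto_cofinite.eventually X.eventually_cofinite_notMem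

theorem TailIn.eq {K : Set V} {R : Ray G} {C D : G.ComponentCompl K} (hC : R.TailIn C)
    (hD : R.TailIn D) : C = D := by
  obtain ⟨n, hnC, hnD⟩ := ((tailIn_iff.1 hC).and (tailIn_iff.1 hD)).exists
  exact ComponentCompl.eq_of_mem_of_mem hnC hnD

theorem exists_tailIn (R : Ray G) (X : Finset V) :
    ∃ C : G.ComponentCompl (X : Set V), R.TailIn C := by
  obtain ⟨N, hN⟩ := eventually_atTop.1 (R.eventually_notMem X)
  refine ⟨G.componentComplMk (hN N le_rfl), N, fun n hn => ?_⟩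
  induction n, hn using Nat.le_induction with
  | base => exact G.componentComplMk_mem _
  | succ n hn ih => exact ComponentCompl.mem_of_adj _ _ ih (hN (n + 1) (by omega)) (R.adj n)

end Ray

section EndSpace

variable {G : SimpleGraph V}

theorem rayEquiv_refl (R : Ray G) : RayEquiv G R R := fun X =>
  (R.exists_tailIn X).imp fun _ h => ⟨h, h⟩

theorem Ends.exists_ray (ω : Ends G) : ∃ R, R ∈ ω.1 := by
  obtain ⟨R, hR⟩ := ω.2
  exact ⟨R, hR ▸ rayEquiv_refl R⟩

theorem Ends.livesIn_iff {ω : Ends G} {R : Ray G} (hR : R ∈ ω.1) {X : Finset V}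
    {C : G.ComponentCompl (X : Set V)} : LivesIn ω X C ↔ R.TailIn C := by
  refine ⟨fun h => h R hR, fun hRC S hS => ?_⟩
  obtain ⟨R₀, hω⟩ := ω.2
  rw [hω] at hR hS
  obtain ⟨D, hR₀D, hRD⟩ := hR X
  obtain ⟨D', hR₀D', hSD'⟩ := hS X
  rwa [← hR₀D.eq hR₀D', hRD.eq hRC] at hSD'

theorem basicSet_subset_basicSet {X Y : Finset V} {C : G.ComponentCompl (X : Set V)}
    {D : G.ComponentCompl (Y : Set V)} (h : ∀ v ∈ C, v ∉ Y → v ∈ D) :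
    basicSet G X C ⊆ basicSet G Y D := fun _ hω R hR =>
  Ray.tailIn_iff.2 (((Ray.tailIn_iff.1 (hω R hR)).and (R.eventually_notMem Y)).mono
    fun _ hn => h _ hn.1 hn.2)

theorem Ends.secondCountableTopology_of_refining {ι : Type*} [Countable ι] (X : ι → Finset V)
    (C : ∀ k, G.ComponentCompl (X k : Set V))
    (h : ∀ (Y : Finset V) (D : G.ComponentCompl (Y : Set V)), ∀ ω ∈ basicSet G Y D,
      ∃ k, ω ∈ basicSet G (X k) (C k) ∧ basicSet G (X k) (C k) ⊆ basicSet G Y D) :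
    SecondCountableTopology (Ends G) := by
  refine ⟨⟨Set.range fun k => basicSet G (X k) (C k), Set.countable_range _,
    le_antisymm (le_generateFrom ?_) (le_generateFrom ?_)⟩⟩
  · rintro _ ⟨k, rfl⟩
    exact TopologicalSpace.isOpen_generateFrom_of_mem ⟨X k, C k, rfl⟩
  · rintro _ ⟨Y, D, rfl⟩
    refine (@isOpen_iff_forall_mem_open _ (.generateFrom _) _).2 fun ω hω => ?_
    obtain ⟨k, hωk, hkD⟩ := h Y D ω hω
    exact ⟨_, hkD, TopologicalSpace.isOpen_generateFrom_of_mem ⟨k, rfl⟩, hωk⟩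

end EndSpace

namespace BranchRays

inductive Vtx : Type
  | node : List Bool → Vtx
  | ray : (ℕ → Bool) → ℕ → Vtx

open Vtx

/-- The vertex of the binary tree at depth `k` on the branch `i`. -/
def pre (i : ℕ → Bool) (k : ℕ) : List Bool := (List.range k).map i

@[simp] theorem length_pre (i : ℕ → Bool) (k : ℕ) : (pre i k).length = k := by simp [pre]

theorem take_pre (i : ℕ → Bool) {m k : ℕ} (h : m ≤ k) : (pre i k).take m = pre i m := by
  simp [pre, ← List.map_take, List.take_range, Nat.min_eq_left h]

theorem pre_succ_ne {i j : ℕ → Bool} {m : ℕ} (h : i m ≠ j m) : pre i (m + 1) ≠ pre j (m + 1) :=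
  fun e => h (by simpa [pre] using congrArg (·[m]?) e)

inductive Rel : Vtx → Vtx → Prop
  | tree (t : List Bool) (b : Bool) : Rel (node t) (node (t ++ [b]))
  | step (i : ℕ → Bool) (n : ℕ) : Rel (ray i n) (ray i (n + 1))
  | attach (i : ℕ → Bool) (n k : ℕ) : Rel (ray i n) (node (pre i k))

theorem Rel.ne {v w : Vtx} (h : Rel v w) : v ≠ w := by
  cases h with
  | tree t b => intro e; simpa using congrArg List.length (node.inj e)
  | step i n => intro e; simpa using (ray.inj e).2
  | attach i n k => simp

def graph : SimpleGraph Vtx where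
  Adj v w := Rel v w ∨ Rel w v
  symm := ⟨fun _ _ h => h.symm⟩
  loopless := ⟨fun _ h => h.elim (·.ne rfl) (·.ne rfl)⟩

def branchRayFun (i : ℕ → Bool) : ℕ → Vtx
  | 0 => node []
  | n + 1 => ray i n

def branchRay (i : ℕ → Bool) : Ray graph where
  f := branchRayFun i
  inj := by rintro (_ | m) (_ | n) h <;> simp_all [branchRayFun]
  adj
    | 0 => Or.inr (Rel.attach i 0 0)
    | n + 1 => Or.inl (Rel.step i n)

theorem range_branchRay_inter {i j : ℕ → Bool} (h : i ≠ j) :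
    Set.range (branchRay i).f ∩ Set.range (branchRay j).f = {node []} := by
  refine Set.Subset.antisymm ?_ (by simpa using ⟨⟨0, rfl⟩, ⟨0, rfl⟩⟩)
  rintro _ ⟨⟨_ | m, rfl⟩, ⟨_ | n, hn⟩⟩
  all_goals simp_all [branchRay, branchRayFun, Eq.comm]

noncomputable def sep (d : ℕ) : Finset Vtx := ((List.finite_length_le Bool d).image node).toFinset

@[simp] theorem node_mem_sep {d : ℕ} {t : List Bool} : node t ∈ sep d ↔ t.length ≤ d := by
  simp [sep]

@[simp] theorem ray_notMem_sep {d : ℕ} {i : ℕ → Bool} {n : ℕ} : ray i n ∉ sep d := by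
  simp [sep]

/-- For `v ∉ sep d`, the tree vertex of depth `d + 1` whose component of `graph - sep d`
contains `v`. -/
def colour (d : ℕ) : Vtx → List Bool
  | node t => t.take (d + 1)
  | ray i _ => pre i (d + 1)

theorem colour_eq_of_rel {d : ℕ} {v w : Vtx} (hv : v ∉ sep d) (hw : w ∉ sep d) (h : Rel v w) :
    colour d v = colour d w := by
  cases h with
  | tree t b => exact (List.take_append_of_le_length (by simp at hv; omega)).symm
  | step i n => rfl
  | attach i n k => exact (take_pre i (by simp at hw; omega)).symm

theorem colour_eq_of_adj {d : ℕ} {v w : Vtx} (hv : v ∉ sep d) (hw : w ∉ sep d)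
    (h : graph.Adj v w) : colour d v = colour d w :=
  h.elim (colour_eq_of_rel hv hw) fun h => (colour_eq_of_rel hw hv h).symm

def compColour (d : ℕ) : graph.ComponentCompl (sep d : Set Vtx) → List Bool :=
  ComponentCompl.lift (fun v _ => colour d v) fun _ _ hv hw => colour_eq_of_adj hv hw

theorem colour_eq_compColour {d : ℕ} {C : graph.ComponentCompl (sep d : Set Vtx)} {v : Vtx}
    (hv : v ∈ C) : colour d v = compColour d C := by
  obtain ⟨_, rfl⟩ := hv
  rfl

theorem node_append_mem_iff {d : ℕ} {K : Set Vtx}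
    (hK : ∀ t : List Bool, d < t.length → node t ∉ K) {C : graph.ComponentCompl K}
    {t : List Bool} (ht : d < t.length) (u : List Bool) :
    node (t ++ u) ∈ C ↔ node t ∈ C := by
  induction u using List.reverseRecOn with
  | nil => simp
  | append_singleton u b ih =>
    rw [← List.append_assoc, ← ih]
    exact ComponentCompl.mem_iff_of_adj (hK _ (by simp; omega)) (hK _ (by simp; omega))
      (Or.inr (Rel.tree _ b))

/-- Outside `sep d`, every vertex is joined to the tree vertex `colour d v` by a path through
tree vertices of depth `> d` and, possibly, one ray vertex. -/
theorem mem_iff_node_colour_mem {d : ℕ} {K : Set Vtx}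
    (hK : ∀ t : List Bool, d < t.length → node t ∉ K) {C : graph.ComponentCompl K} {v : Vtx}
    (hvK : v ∉ K) (hv : v ∉ sep d) :
    v ∈ C ↔ node (colour d v) ∈ C := by
  cases v with
  | node t =>
    have ht : d < t.length := by simpa using hv
    conv_lhs => rw [← List.take_append_drop (d + 1) t]
    exact node_append_mem_iff hK (by simp; omega) _
  | ray i n =>
    exact ComponentCompl.mem_iff_of_adj hvK (hK (pre i (d + 1)) (by simp)) (Or.inl (Rel.attach ..))

theorem compColour_injective (d : ℕ) : Function.Injective (compColour d) := by
  intro C D h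
  have hK : ∀ t : List Bool, d < t.length → node t ∉ (sep d : Set Vtx) := by simp
  obtain ⟨v, hv⟩ := C.nonempty
  obtain ⟨w, hw⟩ := D.nonempty
  have hvC := (mem_iff_node_colour_mem hK hv.1 hv.1).1 hv
  have hwD := (mem_iff_node_colour_mem hK hw.1 hw.1).1 hw
  rw [colour_eq_compColour hv, h, ← colour_eq_compColour hw] at hvC
  exact ComponentCompl.eq_of_mem_of_mem hvC hwD

instance (d : ℕ) : Countable (graph.ComponentCompl (sep d : Set Vtx)) :=
  (compColour_injective d).countable

theorem exists_depth_bound (X : Finset Vtx) :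
    ∃ d, ∀ t : List Bool, d < t.length → node t ∉ X := by
  obtain ⟨d, hd⟩ :=
    ((X.finite_toSet.preimage (fun _ _ _ _ h => node.inj h)).image List.length).bddAbove
  exact ⟨d, fun t ht hX => (hd ⟨t, hX, rfl⟩).not_gt ht⟩

theorem mem_of_mem_sepComponent {d : ℕ} {X : Finset Vtx}
    (hX : ∀ t : List Bool, d < t.length → node t ∉ X)
    {C₂ : graph.ComponentCompl (sep d : Set Vtx)} {C : graph.ComponentCompl (X : Set Vtx)}
    {v w : Vtx} (hw₂ : w ∈ C₂) (hw : w ∈ C) (hv₂ : v ∈ C₂) (hvX : v ∉ X) : v ∈ C :=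
  (calc v ∈ C ↔ node (colour d v) ∈ C := mem_iff_node_colour_mem hX hvX hv₂.1
    _ ↔ node (colour d w) ∈ C := by rw [colour_eq_compColour hv₂, colour_eq_compColour hw₂]
    _ ↔ w ∈ C := (mem_iff_node_colour_mem hX hw.1 hw₂.1).symm).2 hw

theorem exists_basicSet_sep_subset (X : Finset Vtx) (C : graph.ComponentCompl (X : Set Vtx))
    (ω : Ends graph) (hω : ω ∈ basicSet graph X C) :
    ∃ k : (d : ℕ) × graph.ComponentCompl (sep d : Set Vtx),
      ω ∈ basicSet graph (sep k.1) k.2 ∧ basicSet graph (sep k.1) k.2 ⊆ basicSet graph X C := by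
  obtain ⟨d, hd⟩ := exists_depth_bound X
  obtain ⟨R, hR⟩ := ω.exists_ray
  obtain ⟨C₂, hC₂⟩ := R.exists_tailIn (sep d)
  refine ⟨⟨d, C₂⟩, (Ends.livesIn_iff hR).2 hC₂, basicSet_subset_basicSet fun v hv hvX => ?_⟩
  obtain ⟨n, hn₂, hn⟩ := ((Ray.tailIn_iff.1 hC₂).and (Ray.tailIn_iff.1 (hω R hR))).exists
  exact mem_of_mem_sepComponent hd hn₂ hn hv hvX

theorem secondCountableTopology_ends : SecondCountableTopology (Ends graph) :=
  Ends.secondCountableTopology_of_refining _ _ exists_basicSet_sep_subset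

theorem not_rayEquiv_branchRay {i j : ℕ → Bool} (h : i ≠ j) :
    ¬ RayEquiv graph (branchRay i) (branchRay j) := by
  obtain ⟨m, hm⟩ := Function.ne_iff.1 h
  intro hij
  obtain ⟨C, ⟨N, hN⟩, ⟨M, hM⟩⟩ := hij (sep m)
  have hiC : pre i (m + 1) = compColour m C := colour_eq_compColour (hN (N + 1) (by omega))
  have hjC : pre j (m + 1) = compColour m C := colour_eq_compColour (hM (M + 1) (by omega))
  exact pre_succ_ne hm (hiC.trans hjC.symm)

theorem uncountable_branches : Uncountable (ℕ → Bool) := by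
  rw [← Cardinal.aleph0_lt_mk_iff]
  simpa using Cardinal.aleph0_lt_continuum

end BranchRays

/-- There is a graph with second countable end space containing uncountably
many rays that pairwise meet precisely in their common first vertex and
represent pairwise distinct ends. -/
theorem stmt_17 :
    ∃ (V : Type) (G : SimpleGraph V),
      SecondCountableTopology (Ends G) ∧
      ∃ (v₀ : V) (I : Type) (_ : Uncountable I) (R : I → Ray G),
        (∀ i, (R i).f 0 = v₀) ∧
        (∀ i j, i ≠ j → Set.range (R i).f ∩ Set.range (R j).f = {v₀}) ∧
        (∀ i j, i ≠ j → ¬ RayEquiv G (R i) (R j)) :=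
  ⟨_, BranchRays.graph, BranchRays.secondCountableTopology_ends, _, _,
    BranchRays.uncountable_branches, BranchRays.branchRay, fun _ => rfl,
    fun _ _ => BranchRays.range_branchRay_inter, fun _ _ => BranchRays.not_rayEquiv_branchRay⟩
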